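/- arXiv:2206.02473 — 4 statements merged into one kernel-verified Lean document; each statement's English description precedes it below -/
import Mathlib

section
/- (Nye's formula) For any smooth skew-symmetric matrix field A : ℝ³ → so(3), one has −Curl A = (D axl A)ᵀ − tr((D axl A)ᵀ)·Id, and conversely D axl A = −(Curl A)ᵀ + (1/2) tr((Curl A)ᵀ)·Id, where the matrix Curl is taken row-wise. -/
open Matrix BigOperators

noncomputable section

abbrev V3 := Fin 3 → ℝ
abbrev M3 := Matrix (Fin 3) (Fin 3) ℝ

/-- axial vector of a 3×3 matrix (intended for skew-symmetric matrices) -/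
def axl (A : M3) : V3 := ![A 2 1, A 0 2, A 1 0]

/-- the skew-symmetric matrix with given axial vector -/
def antiM (v : V3) : M3 := !![0, -v 2, v 1; v 2, 0, -v 0; -v 1, v 0, 0]

def symM (X : M3) : M3 := (1/2 : ℝ) • (X + Xᵀ)
def skwM (X : M3) : M3 := (1/2 : ℝ) • (X - Xᵀ)
def devM (X : M3) : M3 := X - ((Matrix.trace X)/3) • (1 : M3)

/-- squared Frobenius norm -/
def frob2 (X : M3) : ℝ := ∑ i, ∑ j, (X i j)^2
/-- Frobenius inner product ⟨X,Y⟩ = tr(XYᵀ) -/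
def finner (X Y : M3) : ℝ := ∑ i, ∑ j, X i j * Y i j
/-- squared Euclidean norm of a vector -/
def norm2v (v : V3) : ℝ := ∑ i, (v i)^2

/-- partial derivative ∂ᵢ f -/
def pd (i : Fin 3) (f : V3 → ℝ) (x : V3) : ℝ := fderiv ℝ f x (Pi.single i 1)

/-- Jacobian matrix (D u)_{ij} = ∂_j u_i -/
def jac (u : V3 → V3) (x : V3) : M3 := Matrix.of fun i j => pd j (fun y => u y i) x

/-- curl of a vector field -/
def curlV (u : V3 → V3) (x : V3) : V3 :=
  ![pd 1 (fun y => u y 2) x - pd 2 (fun y => u y 1) x,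
    pd 2 (fun y => u y 0) x - pd 0 (fun y => u y 2) x,
    pd 0 (fun y => u y 1) x - pd 1 (fun y => u y 0) x]

/-- row-wise matrix Curl : (Curl P)_{ij} = ε_{jmn} ∂_m P_{in} -/
def curlM (P : V3 → M3) (x : V3) : M3 := Matrix.of fun i => curlV (fun y => P y i) x

/-- Levi-Civita symbol on Fin 3 -/
def lc (i j k : Fin 3) : ℝ :=
  ((j.val : ℝ) - (i.val : ℝ)) * ((k.val : ℝ) - (j.val : ℝ)) * ((k.val : ℝ) - (i.val : ℝ)) / 2

theorem nye_formula (A : V3 → M3)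
    (hskew : ∀ x, (A x)ᵀ = -(A x))
    (hsmooth : ∀ i j, ContDiff ℝ 1 (fun x => A x i j)) :
    ∀ x : V3,
      -(curlM A x) = (jac (fun y => axl (A y)) x)ᵀ
          - (Matrix.trace ((jac (fun y => axl (A y)) x)ᵀ)) • (1 : M3) ∧
      jac (fun y => axl (A y)) x = -(curlM A x)ᵀ
          + ((Matrix.trace ((curlM A x)ᵀ))/2) • (1 : M3) := by
  intro x
  have hP : ∀ (k i j : Fin 3), pd k (fun y => A y i j) x = -(pd k (fun y => A y j i) x) := by
    intro k i j
    have hfun : (fun y => A y i j) = (fun y => -(A y j i)) := by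
      funext y
      have := congrFun (congrFun (hskew y) j) i
      simp [Matrix.transpose_apply] at this
      linarith
    rw [hfun]
    simp [pd, fderiv_neg]
  constructor <;>
  · ext i j
    fin_cases i <;> fin_cases j <;>
      simp [curlM, curlV, jac, axl, Matrix.trace, Fin.sum_univ_three, Matrix.one_apply,
        Matrix.smul_apply, Matrix.sub_apply, Matrix.add_apply, Matrix.neg_apply,
        Matrix.transpose_apply, Matrix.diag] <;>
      linarith [hP 0 0 1, hP 0 0 2, hP 0 1 2, hP 1 0 1, hP 1 0 2, hP 1 1 2,
        hP 2 0 1, hP 2 0 2, hP 2 1 2, hP 0 0 0, hP 0 1 1, hP 0 2 2,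
        hP 1 0 0, hP 1 1 1, hP 1 2 2, hP 2 0 0, hP 2 1 1, hP 2 2 2]
end
end

section
/- For any smooth skew-symmetric matrix field A : ℝ³ → so(3), setting α = −Curl A and 𝔎 = D axl A, the following converting identities hold: dev sym α = dev sym 𝔎, skw α = −skw 𝔎, and tr α = −2 tr 𝔎. -/
open Matrix BigOperators

noncomputable section

/-! Writing the skew field as `A = antiM a` with `a = axl A`, a direct computation gives Nye's
formula `Curl (antiM a) = (div a) • 1 - (D a)ᵀ`, so `α = 𝔎ᵀ - tr 𝔎 • 1`. The identities are then
linear algebra: transposition fixes `sym` and negates `skw`, while multiples of the identity are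
annihilated by `skw` and by `dev ∘ sym`. -/

lemma pd_neg (i : Fin 3) (f : V3 → ℝ) (x : V3) : pd i (fun y => -f y) x = -pd i f x := by
  rw [pd, pd, fderiv_fun_neg]
  rfl

lemma pd_const (i : Fin 3) (c : ℝ) (x : V3) : pd i (fun _ => c) x = 0 := by
  rw [pd, fderiv_fun_const]
  rfl

lemma antiM_axl_of_transpose_eq_neg {M : M3} (h : Mᵀ = -M) : antiM (axl M) = M := by
  have hM : ∀ i j, M i j = -M j i := fun i j => by
    simpa using congrFun (congrFun h j) i
  have hdiag : ∀ i, M i i = 0 := fun i => by linarith [hM i i]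
  ext i j
  fin_cases i <;> fin_cases j <;> simp [antiM, axl, hdiag, hM 0 1, hM 0 2, hM 1 2]

lemma curlM_antiM (a : V3 → V3) (x : V3) :
    curlM (fun y => antiM (a y)) x = trace (jac a x) • 1 - (jac a x)ᵀ := by
  ext i j
  fin_cases i <;> fin_cases j <;>
    simp only [curlM, curlV, antiM, jac, trace, diag_apply, Fin.sum_univ_three, of_apply, cons_val',
      cons_val_fin_one, cons_val_zero, cons_val_one, cons_val, Fin.isValue, Fin.zero_eta, Fin.mk_one,
      Fin.reduceFinMk, Matrix.sub_apply, Matrix.smul_apply, one_apply_eq, one_apply_ne, ne_eq,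
      Fin.reduceEq, not_false_eq_true, smul_eq_mul, mul_one, mul_zero, transpose_apply, pd_neg,
      pd_const] <;> ring

lemma symM_transpose (X : M3) : symM Xᵀ = symM X := by
  rw [symM, symM, transpose_transpose, add_comm]

lemma skwM_transpose (X : M3) : skwM Xᵀ = -skwM X := by
  rw [skwM, skwM, transpose_transpose, ← smul_neg, neg_sub]

lemma symM_sub_smul_one (X : M3) (c : ℝ) : symM (X - c • 1) = symM X - c • 1 := by
  simp only [symM, transpose_sub, transpose_smul, transpose_one]
  module

lemma skwM_sub_smul_one (X : M3) (c : ℝ) : skwM (X - c • 1) = skwM X := by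
  simp only [skwM, transpose_sub, transpose_smul, transpose_one, sub_sub_sub_cancel_right]

lemma devM_sub_smul_one (X : M3) (c : ℝ) : devM (X - c • 1) = devM X := by
  simp only [devM, trace_sub, trace_smul, trace_one, Fintype.card_fin]
  module

theorem nye_converting_identities_general (A : V3 → M3)
    (hskew : ∀ x, (A x)ᵀ = -(A x)) :
    ∀ x : V3,
      devM (symM (-(curlM A x))) = devM (symM (jac (fun y => axl (A y)) x)) ∧
      skwM (-(curlM A x)) = -(skwM (jac (fun y => axl (A y)) x)) ∧
      Matrix.trace (-(curlM A x)) = -2 * Matrix.trace (jac (fun y => axl (A y)) x) := by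
  intro x
  set K := jac (fun y => axl (A y)) x
  have hcurl : -curlM A x = Kᵀ - trace K • 1 := by
    have hA : A = fun y => antiM (axl (A y)) :=
      funext fun y => (antiM_axl_of_transpose_eq_neg (hskew y)).symm
    rw [congrArg (curlM · x) hA, curlM_antiM, neg_sub]
  refine ⟨?_, ?_, ?_⟩
  · rw [hcurl, symM_sub_smul_one, devM_sub_smul_one, symM_transpose]
  · rw [hcurl, skwM_sub_smul_one, skwM_transpose]
  · rw [hcurl, trace_sub, trace_transpose, trace_smul, trace_one, Fintype.card_fin, smul_eq_mul]
    push_cast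
    ring

theorem nye_converting_identities (A : V3 → M3)
    (hskew : ∀ x, (A x)ᵀ = -(A x))
    (hsmooth : ∀ i j, ContDiff ℝ 1 (fun x => A x i j)) :
    ∀ x : V3,
      devM (symM (-(curlM A x))) = devM (symM (jac (fun y => axl (A y)) x)) ∧
      skwM (-(curlM A x)) = -(skwM (jac (fun y => axl (A y)) x)) ∧
      Matrix.trace (-(curlM A x)) = -2 * Matrix.trace (jac (fun y => axl (A y)) x) :=
  nye_converting_identities_general A hskew
end
end

section
/- For the quadratic form W̃(P) = b₁‖sym P‖² + b₂‖skw P‖² + b₃(tr P)² on ℝ^{3×3}, evaluated at a rank-one matrix P = ξ ⊗ η with unit vectors ξ, η ∈ ℝ³, one has W̃(ξ⊗η) = ((b₁+b₂)/2) sin²θ + (b₁+b₃) cos²θ, where θ is the angle between ξ and η; consequently W̃(ξ⊗η) > 0 for all unit ξ, η if and only if b₁+b₂ > 0 and b₁+b₃ > 0. -/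
open Matrix BigOperators

noncomputable section

/-- the generic quadratic form W̃(P) = b₁‖sym P‖² + b₂‖skw P‖² + b₃(tr P)² -/
def Wt (b1 b2 b3 : ℝ) (P : M3) : ℝ :=
  b1 * frob2 (symM P) + b2 * frob2 (skwM P) + b3 * (Matrix.trace P)^2

lemma key_identity (b1 b2 b3 : ℝ) (ξ η : V3) (hξ : norm2v ξ = 1) (hη : norm2v η = 1) :
    Wt b1 b2 b3 (Matrix.vecMulVec ξ η)
      = (b1 + b2)/2 * (1 - (∑ i, ξ i * η i)^2) + (b1 + b3) * (∑ i, ξ i * η i)^2 := by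
  simp only [Wt, frob2, symM, skwM, norm2v, Matrix.trace, Matrix.diag, Matrix.vecMulVec_apply,
    Matrix.transpose_apply, Matrix.smul_apply, Matrix.add_apply, Matrix.sub_apply,
    Fin.sum_univ_three, smul_eq_mul] at *
  linear_combination ((b1+b2)/2 * (η 0^2 + η 1^2 + η 2^2)) * hξ + ((b1+b2)/2) * hη

theorem rank_one_quadratic_form (b1 b2 b3 : ℝ) :
    (∀ ξ η : V3, norm2v ξ = 1 → norm2v η = 1 →
      Wt b1 b2 b3 (Matrix.vecMulVec ξ η)
        = (b1 + b2)/2 * (1 - (∑ i, ξ i * η i)^2) + (b1 + b3) * (∑ i, ξ i * η i)^2) ∧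
    ((∀ ξ η : V3, norm2v ξ = 1 → norm2v η = 1 → 0 < Wt b1 b2 b3 (Matrix.vecMulVec ξ η)) ↔
      (0 < b1 + b2 ∧ 0 < b1 + b3)) := by
  refine ⟨key_identity b1 b2 b3, ?_, ?_⟩
  · intro h
    have n1 : norm2v ![(1:ℝ),0,0] = 1 := by simp [norm2v, Fin.sum_univ_three]
    have n2 : norm2v ![(0:ℝ),1,0] = 1 := by simp [norm2v, Fin.sum_univ_three]
    have h1 := h ![1,0,0] ![1,0,0] n1 n1
    have h2 := h ![1,0,0] ![0,1,0] n1 n2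
    rw [key_identity b1 b2 b3 _ _ n1 n1] at h1
    rw [key_identity b1 b2 b3 _ _ n1 n2] at h2
    simp [Fin.sum_univ_three] at h1 h2
    constructor <;> nlinarith
  · rintro ⟨h1, h2⟩ ξ η hξ hη
    rw [key_identity b1 b2 b3 ξ η hξ hη]
    simp only [norm2v, Fin.sum_univ_three] at hξ hη
    have hc : (∑ i, ξ i * η i)^2 ≤ 1 := by
      simp only [Fin.sum_univ_three]
      nlinarith [sq_nonneg (ξ 0 * η 1 - ξ 1 * η 0), sq_nonneg (ξ 0 * η 2 - ξ 2 * η 0),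
        sq_nonneg (ξ 1 * η 2 - ξ 2 * η 1)]
    have ht0 : 0 ≤ (∑ i, ξ i * η i)^2 := sq_nonneg _
    rcases le_or_gt ((∑ i, ξ i * η i)^2) (1/2) with h | h <;> nlinarith
end
end

section
/- The Eringen isotropic energy (1/2)[(μ*+ϰ)⟨e,e⟩ + μ*⟨e,eᵀ⟩ + λ(tr e)²] equals μ_e‖dev sym e‖² + μ_c‖skw e‖² + ((2μ_e+3λ_e)/6)(tr e)² for all e ∈ ℝ^{3×3}, where μ_e = μ* + ϰ/2, μ_c = ϰ/2, λ_e = λ. -/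
open Matrix BigOperators

noncomputable section

theorem eringen_energy_identification (μs ϰ lam : ℝ) (e : M3) :
    (1/2) * ((μs + ϰ) * finner e e + μs * finner e eᵀ + lam * (Matrix.trace e)^2)
      = (μs + ϰ/2) * frob2 (devM (symM e)) + (ϰ/2) * frob2 (skwM e)
          + ((2*(μs + ϰ/2) + 3*lam)/6) * (Matrix.trace e)^2 := by
  simp only [finner, frob2, devM, symM, skwM, Matrix.trace, Matrix.diag,
    Fin.sum_univ_three, Matrix.sub_apply, Matrix.add_apply, Matrix.smul_apply,
    Matrix.transpose_apply, Matrix.one_apply, smul_eq_mul]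
  norm_num [Fin.ext_iff]
  ring
end
end
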